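/- There exists a probability P on a finite set X and a probability P' compatible with P (i.e., P' is the pignistic transform of some belief function Bel with Bel ≤ P) such that the argmax of P' is disjoint from the argmax restricted to the support of P. -/

import Mathlib

/-!
Take `P` uniform on a set `S` of `k ≥ 2` points and a point `x₀ ∉ S`, and let `m` put mass `1/k`
on each pair `{x₀, x}` with `x ∈ S`. A focal set lies inside `A` only if its point of `S` does, so
`Bel ≤ P`. The pignistic transform splits each pair evenly, so `P'(x₀) = 1/2` while
`P'(x) = 1/(2k) < 1/2` elsewhere: `P'` is maximised only at `x₀`, which lies outside the support
of `P`.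
-/

open Finset

variable {α : Type*} [DecidableEq α]

noncomputable def pignistic [Fintype α] (m : Finset α → ℝ) (x : α) : ℝ :=
  ∑ B ∈ (univ : Finset α).powerset.filter (fun B => x ∈ B), m B / B.card

noncomputable def uniformProb (S A : Finset α) : ℝ := (#(A ∩ S) : ℝ) / #S

noncomputable def pairMass (x₀ : α) (S B : Finset α) : ℝ :=
  ∑ x ∈ S, if B = {x₀, x} then (#S : ℝ)⁻¹ else 0

section uniformProb

variable (S : Finset α)

theorem uniformProb_empty : uniformProb S ∅ = 0 := by simp [uniformProb]

theorem uniformProb_univ [Fintype α] (hS : S.Nonempty) : uniformProb S univ = 1 := by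
  simp [uniformProb, hS.card_pos.ne']

theorem uniformProb_nonneg (A : Finset α) : 0 ≤ uniformProb S A := by
  unfold uniformProb; positivity

theorem uniformProb_union {A B : Finset α} (h : Disjoint A B) :
    uniformProb S (A ∪ B) = uniformProb S A + uniformProb S B := by
  have hAB : Disjoint (A ∩ S) (B ∩ S) := h.mono inter_subset_left inter_subset_left
  simp only [uniformProb, union_inter_distrib_right, card_union_of_disjoint hAB, Nat.cast_add,
    add_div]

end uniformProb

section pairMass

variable {x₀ : α} {S : Finset α}

theorem pairMass_nonneg (B : Finset α) : 0 ≤ pairMass x₀ S B :=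
  sum_nonneg fun _ _ => by split_ifs <;> positivity

theorem pairMass_empty : pairMass x₀ S ∅ = 0 :=
  sum_eq_zero fun x _ => if_neg (insert_nonempty x₀ {x}).ne_empty.symm

theorem sum_powerset_pairMass (A : Finset α) :
    ∑ B ∈ A.powerset, pairMass x₀ S B = ∑ x ∈ S, if {x₀, x} ⊆ A then (#S : ℝ)⁻¹ else 0 := by
  simp only [pairMass]
  rw [sum_comm]
  exact sum_congr rfl fun x _ => by simp only [sum_ite_eq', mem_powerset]

theorem sum_powerset_pairMass_le_uniformProb (A : Finset α) :
    ∑ B ∈ A.powerset, pairMass x₀ S B ≤ uniformProb S A := by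
  calc ∑ B ∈ A.powerset, pairMass x₀ S B
      ≤ ∑ x ∈ S, if x ∈ A then (#S : ℝ)⁻¹ else 0 := by
        rw [sum_powerset_pairMass]
        refine sum_le_sum fun x _ => ?_
        by_cases hx : {x₀, x} ⊆ A
        · simp [hx, hx (mem_insert_of_mem (mem_singleton_self x))]
        · split_ifs <;> positivity
    _ = uniformProb S A := by
        rw [← sum_filter, sum_const, filter_mem_eq_inter, inter_comm, nsmul_eq_mul,
          uniformProb, div_eq_mul_inv]

variable [Fintype α]

theorem sum_pairMass (hS : S.Nonempty) :
    ∑ B ∈ (univ : Finset α).powerset, pairMass x₀ S B = 1 := by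
  rw [sum_powerset_pairMass]
  simp [hS.card_pos.ne']

theorem pignistic_pairMass (hx₀ : x₀ ∉ S) (y : α) :
    pignistic (pairMass x₀ S) y =
      ∑ x ∈ S, if y ∈ ({x₀, x} : Finset α) then (2 * #S : ℝ)⁻¹ else 0 := by
  simp only [pignistic, pairMass, sum_div, ite_div, zero_div]
  rw [sum_comm]
  refine sum_congr rfl fun x hx => ?_
  have hcard : #({x₀, x} : Finset α) = 2 := card_pair (ne_of_mem_of_not_mem hx hx₀).symm
  simp only [sum_ite_eq', mem_filter, mem_powerset, subset_univ, true_and, hcard, Nat.cast_two,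
    mul_inv, div_eq_mul_inv, mul_comm]

theorem pignistic_pairMass_self (hx₀ : x₀ ∉ S) (hS : S.Nonempty) :
    pignistic (pairMass x₀ S) x₀ = 1 / 2 := by
  rw [pignistic_pairMass hx₀]
  simp only [mem_insert_self, if_true, sum_const, nsmul_eq_mul]
  field_simp [hS.card_pos.ne']

theorem pignistic_pairMass_of_ne (hx₀ : x₀ ∉ S) {y : α} (hy : y ≠ x₀) :
    pignistic (pairMass x₀ S) y ≤ (2 * #S : ℝ)⁻¹ := by
  rw [pignistic_pairMass hx₀]
  calc ∑ x ∈ S, (if y ∈ ({x₀, x} : Finset α) then (2 * #S : ℝ)⁻¹ else 0)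
      = ∑ x ∈ S, if y = x then (2 * #S : ℝ)⁻¹ else 0 := by simp [hy]
    _ ≤ (2 * #S : ℝ)⁻¹ := by rw [sum_ite_eq]; split_ifs; exacts [le_rfl, by positivity]

theorem eq_of_forall_pignistic_pairMass_le (hx₀ : x₀ ∉ S) (hS : 2 ≤ #S) {x : α}
    (hx : ∀ y, pignistic (pairMass x₀ S) y ≤ pignistic (pairMass x₀ S) x) : x = x₀ := by
  by_contra hne
  have hS' : S.Nonempty := card_pos.mp (by omega)
  have hlt : (2 * #S : ℝ)⁻¹ < 1 / 2 := by
    rw [one_div]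
    exact inv_strictAnti₀ two_pos (by norm_cast; omega)
  have := (hx x₀).trans (pignistic_pairMass_of_ne hx₀ hne)
  rw [pignistic_pairMass_self hx₀ hS'] at this
  linarith

end pairMass

/-- There exist a probability `P` on a finite set and a compatible pignistic
probability `P'` such that the maximizers of `P'` are disjoint from the
maximizers of `P` restricted to the support of `P`. -/
theorem stmt13 :
    ∃ (n : ℕ) (P m : Finset (Fin n) → ℝ),
      (P ∅ = 0 ∧ P Finset.univ = 1 ∧ (∀ A, 0 ≤ P A) ∧
        ∀ A B : Finset (Fin n), Disjoint A B → P (A ∪ B) = P A + P B) ∧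
      (m ∅ = 0 ∧ (∀ A, 0 ≤ m A) ∧
        ∑ A ∈ (Finset.univ : Finset (Fin n)).powerset, m A = 1) ∧
      (∀ A : Finset (Fin n), (∑ B ∈ A.powerset, m B) ≤ P A) ∧
      ∀ x : Fin n,
        (∀ y : Fin n,
          (∑ B ∈ (Finset.univ : Finset (Fin n)).powerset.filter
              (fun B => y ∈ B), m B / B.card)
          ≤ ∑ B ∈ (Finset.univ : Finset (Fin n)).powerset.filter
              (fun B => x ∈ B), m B / B.card) →
        ¬ (0 < P {x} ∧ ∀ y : Fin n, 0 < P {y} → P {y} ≤ P {x}) := by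
  set S : Finset (Fin 3) := {1, 2}
  have hx₀ : (0 : Fin 3) ∉ S := by decide
  have hS : S.Nonempty := ⟨1, by decide⟩
  refine ⟨3, uniformProb S, pairMass 0 S,
    ⟨uniformProb_empty S, uniformProb_univ S hS, uniformProb_nonneg S,
      fun _ _ => uniformProb_union S⟩,
    ⟨pairMass_empty, pairMass_nonneg, sum_pairMass hS⟩, sum_powerset_pairMass_le_uniformProb,
    fun x hx ⟨hpos, _⟩ => ?_⟩
  obtain rfl := eq_of_forall_pignistic_pairMass_le hx₀ (by decide) hx
  simp [uniformProb, S] at hpos
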